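/- Suppose w : ℝ → ℝ satisfies w'(t) = (μ/D)·R(w(t))·I(t) where R(w) = R_on·(w/D) + R_off·(1 − w/D), w(0) = 0, and q(t) = ∫₀ᵗ I(s) ds. Assume R_on ≠ R_off, D > 0, and all quantities are such that R(w(t)) > 0 on the interval considered. Then w(t) = D·R_off·(exp(μ·(R_on − R_off)·q(t)/D²) − 1)/(R_on − R_off). -/

import Mathlib

/-!
Since `R` is affine, `y = R ∘ w` solves the linear equation `y' = k I y` with
`k = μ (R_on - R_off) / D²`. The integrating factor `exp (-k q)` turns this into
`(y · exp (-k q))' = 0`, so `R (w t) = R (w 0) · exp (k q t) = R_off · exp (k q t)`,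
and solving this affine equation for `w t` gives the formula.
-/

open Real

theorem eq_mul_exp_sub_of_hasDerivAt {f A a : ℝ → ℝ} (hA : ∀ t, HasDerivAt A (a t) t)
    (hf : ∀ t, HasDerivAt f (a t * f t) t) (s t : ℝ) :
    f t = f s * exp (A t - A s) := by
  have hconst : ∀ t, HasDerivAt (fun t => f t * exp (-A t)) 0 t := fun t =>
    ((hf t).mul (hA t).neg.exp).congr_deriv (by ring)
  have key := is_const_of_deriv_eq_zero (fun t => (hconst t).differentiableAt)
    (fun t => (hconst t).deriv) t s
  calc f t = f t * exp (-A t) * exp (A t) := by rw [mul_assoc, ← exp_add]; simp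
    _ = f s * exp (A t - A s) := by rw [key, mul_assoc, ← exp_add]; ring_nf

theorem stmt_3_general (μ D Ron Roff : ℝ) (hD : 0 < D) (hne : Ron ≠ Roff)
    (I w : ℝ → ℝ) (hI : Continuous I)
    (q : ℝ → ℝ) (hq : ∀ t, q t = ∫ s in (0:ℝ)..t, I s)
    (R : ℝ → ℝ) (hR : ∀ x, R x = Ron * (x / D) + Roff * (1 - x / D))
    (hw' : ∀ t, HasDerivAt w (μ / D * R (w t) * I t) t)
    (hw0 : w 0 = 0) :
    ∀ t, w t = D * Roff * (Real.exp (μ * (Ron - Roff) * q t / D ^ 2) - 1) /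
      (Ron - Roff) := by
  set k := μ * (Ron - Roff) / D ^ 2 with hk
  have hRw : ∀ x, R x = Roff + (Ron - Roff) / D * x := fun x => by rw [hR]; ring
  have hRw' : ∀ t, HasDerivAt (fun t => R (w t)) (k * I t * R (w t)) t := fun t => by
    rw [funext fun t => hRw (w t)]
    exact (((hw' t).const_mul ((Ron - Roff) / D)).const_add Roff).congr_deriv
      (by rw [hRw, hk]; ring)
  have hkq : ∀ t, HasDerivAt (fun t => k * q t) (k * I t) t := fun t => by
    rw [funext hq]
    exact ((hI.integral_hasStrictDerivAt 0 t).hasDerivAt).const_mul k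
  intro t
  have hsol := eq_mul_exp_sub_of_hasDerivAt hkq hRw' 0 t
  rw [hRw, hRw, hw0, hq 0, intervalIntegral.integral_same] at hsol
  simp only [mul_zero, add_zero, sub_zero] at hsol
  rw [eq_div_iff (sub_ne_zero.mpr hne), show μ * (Ron - Roff) * q t / D ^ 2 = k * q t by ring]
  field_simp at hsol
  linear_combination hsol

theorem stmt_3 (μ D Ron Roff : ℝ) (hD : 0 < D) (hne : Ron ≠ Roff)
    (I w : ℝ → ℝ) (hI : Continuous I)
    (q : ℝ → ℝ) (hq : ∀ t, q t = ∫ s in (0:ℝ)..t, I s)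
    (R : ℝ → ℝ) (hR : ∀ x, R x = Ron * (x / D) + Roff * (1 - x / D))
    (hw' : ∀ t, HasDerivAt w (μ / D * R (w t) * I t) t)
    (hw0 : w 0 = 0)
    (hRpos : ∀ t, 0 < R (w t)) :
    ∀ t, w t = D * Roff * (Real.exp (μ * (Ron - Roff) * q t / D ^ 2) - 1) /
      (Ron - Roff) :=
  stmt_3_general μ D Ron Roff hD hne I w hI q hq R hR hw' hw0
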